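/- Let G be a finite abelian group with |G| ≥ 2, f : G → ℝ a real-valued positive definite function, and v : Ĝ → ℝ a nonzero function with v(χ) ≥ 0 for all χ ∈ Ĝ. If μ := |supp(v)| < |G|, then ν₂(f) ≥ (|G|·R_f(v) − μ·f(1))/(|G| − μ). -/

import Mathlib

open Complex Finset

/-- The dual group `Ĝ = G →* ℂˣ` of a finite abelian group is finite. -/
noncomputable instance instFintypeDual (G : Type*) [CommGroup G] [Fintype G] :
    Fintype (G →* ℂˣ) := by
  have : NeZero (Monoid.exponent G) := ⟨Monoid.exponent_ne_zero_of_finite⟩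
  have : Finite (G →* ℂˣ) := by
    obtain ⟨e⟩ := CommGroup.monoidHom_mulEquiv_of_hasEnoughRootsOfUnity G ℂ
    exact Finite.of_equiv G e.symm.toEquiv
  exact Fintype.ofFinite _

/-- The Fourier transform of `f : G → ℂ`, as a function on the dual group `G →* ℂˣ`:
`f̂(χ) = (1/|G|) ∑_{x ∈ G} f(x) conj(χ(x))`. -/
noncomputable def fourierT {G : Type*} [CommGroup G] [Fintype G] (f : G → ℂ) :
    (G →* ℂˣ) → ℂ :=
  fun χ => (Fintype.card G : ℂ)⁻¹ * ∑ x : G, f x * (starRingEnd ℂ) ((χ x : ℂ))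

/-- Normalized inner product `⟨u,w⟩ = (1/|α|) ∑ u(χ) conj(w(χ))`. -/
noncomputable def inn {α : Type*} [Fintype α] (u w : α → ℂ) : ℂ :=
  (Fintype.card α : ℂ)⁻¹ * ∑ χ : α, u χ * (starRingEnd ℂ) (w χ)

/-- Normalized convolution `(u∗w)(χ) = (1/|α|) ∑_ρ u(χρ⁻¹) w(ρ)`. -/
noncomputable def convol {α : Type*} [Group α] [Fintype α] (u w : α → ℂ) : α → ℂ :=
  fun χ => (Fintype.card α : ℂ)⁻¹ * ∑ ρ : α, u (χ * ρ⁻¹) * w ρ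

/-- The Rayleigh quotient `R_f(v) = |G| ⟨f̂ ∗ v, v⟩ / ⟨v, v⟩`. -/
noncomputable def Rq {G : Type*} [CommGroup G] [Fintype G] (f : G → ℂ)
    (v : (G →* ℂˣ) → ℂ) : ℂ :=
  (Fintype.card G : ℂ) * inn (convol (fourierT f) v) v / inn v v

/-- `nu f k` is the `k`-th largest value (1-indexed, with multiplicity) of the
real-valued function `f` on a finite type. -/
noncomputable def nu {G : Type*} [Fintype G] (f : G → ℝ) (k : ℕ) : ℝ :=
  ((Finset.univ.val.map f).sort (· ≤ ·)).getD (Fintype.card G - k) 0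

/-- `f` is positive definite: every Fourier coefficient is a nonnegative real number. -/
def PosDef {G : Type*} [CommGroup G] [Fintype G] (f : G → ℂ) : Prop :=
  ∀ χ : G →* ℂˣ, (fourierT f χ).im = 0 ∧ 0 ≤ (fourierT f χ).re

/-!
With `w(x) = ∑_χ v(χ) χ(x)` the inverse Fourier transform of `v`, the Rayleigh quotient is the
average of `f` against the weights `|w(x)|²`, whose total mass is `|G| ∑ v²` by Parseval. Positive
definiteness makes `f(1)` the maximum of `f`, every other point contributes at most `ν₂(f)`, and
the weight `|w(1)|² = (∑ v)²` of the point `1` is at most `μ ∑ v²` by Cauchy–Schwarz on `supp v`.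
-/

section Characters

variable {G : Type*} [CommGroup G] [Fintype G]

lemma norm_char_apply (χ : G →* ℂˣ) (x : G) : ‖(χ x : ℂ)‖ = 1 := by
  have h : (χ x : ℂ) ^ Fintype.card G = 1 := by
    rw [← Units.val_pow_eq_pow_val, ← map_pow, pow_card_eq_one, map_one, Units.val_one]
  exact Complex.norm_eq_one_of_pow_eq_one h Fintype.card_ne_zero

lemma conj_char_apply (χ : G →* ℂˣ) (x : G) : starRingEnd ℂ (χ x : ℂ) = (χ⁻¹ x : ℂ) := by
  rw [← RCLike.inv_eq_conj (norm_char_apply χ x), MonoidHom.inv_apply, Units.val_inv_eq_inv_val]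

lemma card_dual : Fintype.card (G →* ℂˣ) = Fintype.card G := by
  have : NeZero (Monoid.exponent G) := ⟨Monoid.exponent_ne_zero_of_finite⟩
  obtain ⟨e⟩ := CommGroup.monoidHom_mulEquiv_of_hasEnoughRootsOfUnity G ℂ
  exact Fintype.card_congr e.toEquiv

lemma sum_char_apply_eq_zero {χ : G →* ℂˣ} (hχ : χ ≠ 1) : ∑ x : G, (χ x : ℂ) = 0 :=
  sum_hom_units_eq_zero ((Units.coeHom ℂ).comp χ) fun h =>
    hχ <| MonoidHom.ext fun x => Units.ext <| by simpa using DFunLike.congr_fun h x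

lemma sum_dual_apply_eq_zero {x : G} (hx : x ≠ 1) : ∑ χ : G →* ℂˣ, (χ x : ℂ) = 0 := by
  have : NeZero (Monoid.exponent G) := ⟨Monoid.exponent_ne_zero_of_finite⟩
  obtain ⟨ψ, hψ⟩ := CommGroup.exists_apply_ne_one_of_hasEnoughRootsOfUnity G ℂ hx
  exact sum_hom_units_eq_zero ((Units.coeHom ℂ).comp (MonoidHom.eval x)) fun h =>
    hψ <| Units.ext <| by simpa using DFunLike.congr_fun h ψ

end Characters

section Fourier

variable {G : Type*} [CommGroup G] [Fintype G]

lemma fourierT_eq (f : G → ℂ) (χ : G →* ℂˣ) :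
    fourierT f χ = (Fintype.card G : ℂ)⁻¹ * ∑ x : G, f x * (χ⁻¹ x : ℂ) := by
  simp only [fourierT, conj_char_apply]

theorem sum_fourierT_mul_char_apply (f : G → ℂ) (x : G) :
    ∑ χ : G →* ℂˣ, fourierT f χ * (χ x : ℂ) = f x := by
  have hN : (Fintype.card G : ℂ) ≠ 0 := Nat.cast_ne_zero.mpr Fintype.card_ne_zero
  have hterm (χ : G →* ℂˣ) : fourierT f χ * (χ x : ℂ)
      = (Fintype.card G : ℂ)⁻¹ * ∑ y : G, f y * (χ (x * y⁻¹) : ℂ) := by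
    rw [fourierT_eq, mul_assoc, sum_mul]
    congr 1
    refine sum_congr rfl fun y _ => ?_
    rw [mul_assoc, MonoidHom.inv_apply, map_mul χ x, mul_comm (χ x), Units.val_mul, map_inv]
  simp only [hterm, ← mul_sum]
  rw [sum_comm, sum_eq_single x]
  · simp [card_dual, hN]
  · intro y _ hyx
    rw [← mul_sum, sum_dual_apply_eq_zero fun h => hyx (mul_inv_eq_one.mp h).symm, mul_zero]
  · simp

theorem PosDef.apply_le_apply_one {f : G → ℝ} (hf : PosDef fun x => (f x : ℂ)) (x : G) :
    f x ≤ f 1 := by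
  have hre (z : G) : f z = ∑ χ : G →* ℂˣ, (fourierT (fun y => (f y : ℂ)) χ).re * (χ z : ℂ).re := by
    have h := congrArg re (sum_fourierT_mul_char_apply (fun y => (f y : ℂ)) z)
    rw [ofReal_re, re_sum] at h
    rw [← h]
    exact sum_congr rfl fun χ _ => by rw [mul_re, (hf χ).1, zero_mul, sub_zero]
  rw [hre x, hre 1]
  refine sum_le_sum fun χ _ => ?_
  rw [map_one, Units.val_one, one_re, mul_one]
  exact mul_le_of_le_one_right (hf χ).2 ((re_le_norm _).trans (norm_char_apply χ x).le)

end Fourier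

section RayleighQuotient

variable {G : Type*} [CommGroup G] [Fintype G]

noncomputable def invFourier (v : (G →* ℂˣ) → ℂ) (x : G) : ℂ :=
  ∑ χ : G →* ℂˣ, v χ * (χ x : ℂ)

lemma normSq_invFourier (v : (G →* ℂˣ) → ℂ) (x : G) :
    (normSq (invFourier v x) : ℂ) =
      ∑ χ : G →* ℂˣ, ∑ ρ : G →* ℂˣ, starRingEnd ℂ (v χ) * v ρ * ((χ⁻¹ * ρ) x : ℂ) := by
  rw [normSq_eq_conj_mul_self, invFourier, map_sum, sum_mul_sum]
  refine sum_congr rfl fun χ _ => sum_congr rfl fun ρ _ => ?_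
  rw [map_mul, conj_char_apply, MonoidHom.mul_apply, Units.val_mul]
  ring

theorem sum_normSq_invFourier (v : (G →* ℂˣ) → ℂ) :
    ∑ x : G, normSq (invFourier v x) = Fintype.card G * ∑ χ : G →* ℂˣ, normSq (v χ) := by
  have hdiag (χ : G →* ℂˣ) : ∑ ρ : G →* ℂˣ, starRingEnd ℂ (v χ) * v ρ *
      ∑ x : G, ((χ⁻¹ * ρ) x : ℂ) = Fintype.card G * normSq (v χ) := by
    rw [sum_eq_single χ]
    · simp [mul_comm, normSq_eq_conj_mul_self]
    · intro ρ _ hρ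
      rw [sum_char_apply_eq_zero fun h => hρ (inv_mul_eq_one.mp h).symm, mul_zero]
    · simp
  apply ofReal_injective
  push_cast
  calc ∑ x : G, (normSq (invFourier v x) : ℂ)
      = ∑ χ : G →* ℂˣ, ∑ ρ : G →* ℂˣ, starRingEnd ℂ (v χ) * v ρ * ∑ x : G, ((χ⁻¹ * ρ) x : ℂ) := by
        simp only [normSq_invFourier, mul_sum]
        rw [sum_comm]
        exact sum_congr rfl fun χ _ => sum_comm
    _ = ∑ χ : G →* ℂˣ, (Fintype.card G : ℂ) * normSq (v χ) := sum_congr rfl fun χ _ => hdiag χ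
    _ = _ := (mul_sum _ _ _).symm

lemma inn_self (v : (G →* ℂˣ) → ℂ) :
    inn v v = (Fintype.card G : ℂ)⁻¹ * ∑ χ : G →* ℂˣ, (normSq (v χ) : ℂ) := by
  simp only [inn, card_dual, mul_conj]

lemma inn_convol_fourierT (f : G → ℂ) (v : (G →* ℂˣ) → ℂ) :
    inn (convol (fourierT f) v) v =
      (Fintype.card G : ℂ)⁻¹ ^ 3 * ∑ x : G, f x * normSq (invFourier v x) := by
  have hinv (χ ρ : G →* ℂˣ) : (χ * ρ⁻¹)⁻¹ = χ⁻¹ * ρ := by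
    ext x
    simp [mul_comm]
  simp only [inn, convol, card_dual, fourierT_eq, hinv, normSq_invFourier, sum_mul, mul_sum]
  refine Eq.trans (sum_congr rfl fun χ _ => sum_comm) (sum_comm.trans ?_)
  refine sum_congr rfl fun x _ => sum_congr rfl fun ρ _ => sum_congr rfl fun χ _ => by ring

theorem Rq_eq_div (f : G → ℂ) (v : (G →* ℂˣ) → ℂ) :
    Rq f v =
      (∑ x : G, f x * normSq (invFourier v x)) / ∑ x : G, (normSq (invFourier v x) : ℂ) := by
  have hN : (Fintype.card G : ℂ) ≠ 0 := Nat.cast_ne_zero.mpr Fintype.card_ne_zero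
  rw [Rq, inn_convol_fourierT, inn_self, ← ofReal_sum, ← ofReal_sum, sum_normSq_invFourier]
  push_cast
  field_simp

end RayleighQuotient

section OrderStatistics

theorem List.le_getD_length_sub_two {α : Type*} [LinearOrder α] {L : List α}
    (hL : L.Pairwise (· ≤ ·)) {a : α} (d : α) (h : 2 ≤ L.countP (a ≤ ·)) :
    a ≤ L.getD (L.length - 2) d := by
  have hk : L.length - 2 < L.length := by have := L.countP_le_length (p := (a ≤ ·)); omega
  rw [List.getD_eq_getElem _ _ hk]
  by_contra! hlt
  have hdrop : L.drop (L.length - 2) = L[L.length - 2] :: L.drop (L.length - 2 + 1) :=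
    List.drop_eq_getElem_cons hk
  -- by sortedness, `L[L.length - 2]` and everything before it lies below `a`
  have htake : (L.take (L.length - 2)).countP (a ≤ ·) = 0 := by
    refine List.countP_eq_zero.mpr fun b hb hab => ?_
    have hmem : L[L.length - 2] ∈ L.drop (L.length - 2) := hdrop ▸ List.mem_cons_self
    exact (decide_eq_true_iff.mp hab).not_gt
      ((hL.rel_of_mem_take_of_mem_drop hb hmem).trans_lt hlt)
  have hlast : (L.drop (L.length - 2 + 1)).countP (a ≤ ·) ≤ 1 :=
    (List.countP_le_length).trans (by rw [List.length_drop]; omega)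
  rw [← L.take_append_drop (L.length - 2), List.countP_append, htake, hdrop,
    List.countP_cons] at h
  simp only [hlt.not_ge, decide_false, Bool.false_eq_true, if_false] at h
  omega

variable {G : Type*} [Fintype G]

lemma length_sort_map (f : G → ℝ) :
    ((univ.val.map f).sort (· ≤ ·)).length = Fintype.card G := by
  rw [Multiset.length_sort, Multiset.card_map, card_val, card_univ]

theorem exists_apply_eq_nu (f : G → ℝ) {k : ℕ} (hk : 1 ≤ k) (hkG : k ≤ Fintype.card G) :
    ∃ x, f x = nu f k := by
  have hmem : nu f k ∈ (univ.val.map f).sort (· ≤ ·) := by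
    rw [nu, List.getD_eq_getElem _ _ (by rw [length_sort_map]; omega)]
    exact List.getElem_mem _
  obtain ⟨x, -, hx⟩ := Multiset.mem_map.mp ((Multiset.mem_sort _).mp hmem)
  exact ⟨x, hx⟩

theorem apply_le_nu_two {f : G → ℝ} {x y : G} (hxy : x ≠ y) (h : f x ≤ f y) : f x ≤ nu f 2 := by
  classical
  have hcount : 2 ≤ ((univ.val.map f).sort (· ≤ ·)).countP (f x ≤ ·) := by
    rw [← Multiset.coe_countP, Multiset.sort_eq, Multiset.countP_map]
    calc 2 = ({x, y} : Finset G).card := (card_pair hxy).symm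
      _ ≤ (univ.filter (f x ≤ f ·)).card :=
        card_le_card fun z hz => by rcases mem_insert.mp hz with rfl | hz <;> simp_all
      _ = _ := rfl
  have := List.le_getD_length_sub_two (Multiset.pairwise_sort _ _) 0 hcount
  rwa [length_sort_map] at this

end OrderStatistics

section Inequalities

variable {ι : Type*} [Fintype ι]

theorem sq_sum_le_ncard_support_mul_sum_sq (u : ι → ℝ) :
    (∑ i, u i) ^ 2 ≤ (Function.support u).ncard * ∑ i, u i ^ 2 := by
  classical
  have hsupp : (Function.support u).ncard = (univ.filter (u · ≠ 0)).card := by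
    rw [← Set.ncard_coe_finset]; congr; ext; simp
  rw [hsupp, ← sum_filter_ne_zero]
  refine sq_sum_le_card_mul_sum_sq.trans (mul_le_mul_of_nonneg_left ?_ (Nat.cast_nonneg _))
  exact sum_le_sum_of_subset_of_nonneg (filter_subset _ _) fun i _ _ => sq_nonneg (u i)

theorem sum_mul_le_of_forall_ne_le {f a : ι → ℝ} (ha : ∀ i, 0 ≤ a i) (i₀ : ι) {c : ℝ}
    (hf : ∀ i ≠ i₀, f i ≤ c) : ∑ i, f i * a i ≤ c * ∑ i, a i + (f i₀ - c) * a i₀ := by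
  classical
  have hrest : ∑ i ∈ univ.erase i₀, f i * a i ≤ c * ∑ i ∈ univ.erase i₀, a i := by
    rw [mul_sum]
    exact sum_le_sum fun i hi => mul_le_mul_of_nonneg_right (hf i (ne_of_mem_erase hi)) (ha i)
  rw [← add_sum_erase _ _ (mem_univ i₀), ← add_sum_erase _ _ (mem_univ i₀)]
  linarith

end Inequalities

theorem stmt_3_general (G : Type*) [CommGroup G] [Fintype G] (hG : 2 ≤ Fintype.card G)
    (f : G → ℝ) (hf : PosDef (fun x => (f x : ℂ)))
    (v : (G →* ℂˣ) → ℝ) (hv : v ≠ 0)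
    (μ : ℕ) (hμ : μ = (Function.support v).ncard) (hμlt : μ < Fintype.card G) :
    nu f 2 ≥
      ((Fintype.card G : ℝ) * (Rq (fun x => (f x : ℂ)) (fun χ => (v χ : ℂ))).re -
        μ * f 1) / ((Fintype.card G : ℝ) - μ) := by
  set S : ℝ := ∑ χ, v χ ^ 2
  set a : G → ℝ := fun x => normSq (invFourier (fun χ => (v χ : ℂ)) x)
  have hS : 0 < S := by
    obtain ⟨χ, hχ⟩ := Function.ne_iff.mp hv
    exact sum_pos' (fun χ _ => sq_nonneg (v χ)) ⟨χ, mem_univ χ, pow_two_pos_of_ne_zero hχ⟩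
  have hmass : ∑ x, a x = Fintype.card G * S := by
    simp only [a, sum_normSq_invFourier, normSq_ofReal, S, sq]
  have hRq : (Rq (fun x => (f x : ℂ)) (fun χ => (v χ : ℂ))).re =
      (∑ x, f x * a x) / (Fintype.card G * S) := by
    rw [Rq_eq_div, ← hmass]
    norm_cast
  have ha1 : a 1 ≤ μ * S := by
    have : a 1 = (∑ χ, v χ) ^ 2 := by simp [a, invFourier, ← ofReal_sum, sq]
    exact this ▸ hμ ▸ sq_sum_le_ncard_support_mul_sum_sq v
  have hmax : nu f 2 ≤ f 1 := by
    obtain ⟨x, hx⟩ := exists_apply_eq_nu f one_le_two hG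
    exact hx ▸ hf.apply_le_apply_one x
  have hsum : ∑ x, f x * a x ≤ nu f 2 * ∑ x, a x + (f 1 - nu f 2) * a 1 :=
    sum_mul_le_of_forall_ne_le (fun x => normSq_nonneg _) 1 fun x hx =>
      apply_le_nu_two hx (hf.apply_le_apply_one x)
  have hNμ : 0 < (Fintype.card G : ℝ) - μ := sub_pos.mpr (by exact_mod_cast hμlt)
  rw [ge_iff_le, div_le_iff₀ hNμ, hRq, mul_div_assoc', mul_div_mul_left _ _ (by positivity),
    sub_le_iff_le_add, div_le_iff₀ hS]
  rw [hmass] at hsum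
  linarith [mul_le_mul_of_nonneg_left ha1 (sub_nonneg.mpr hmax)]

/-- lower bound of `ν₂(f)` in terms of the Rayleigh quotient of a
nonnegative nonzero `v` with `μ = |supp(v)| < |G|`. -/
theorem stmt_3 (G : Type*) [CommGroup G] [Fintype G] (hG : 2 ≤ Fintype.card G)
    (f : G → ℝ) (hf : PosDef (fun x => (f x : ℂ)))
    (v : (G →* ℂˣ) → ℝ) (hv : v ≠ 0) (hvpos : ∀ χ, 0 ≤ v χ)
    (μ : ℕ) (hμ : μ = (Function.support v).ncard) (hμlt : μ < Fintype.card G) :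
    nu f 2 ≥
      ((Fintype.card G : ℝ) * (Rq (fun x => (f x : ℂ)) (fun χ => (v χ : ℂ))).re -
        μ * f 1) / ((Fintype.card G : ℝ) - μ) :=
  stmt_3_general G hG f hf v hv μ hμ hμlt
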